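/- First-order derivative of the intrinsic Taylor polynomial: for u ∈ C^{n,α}_B with n ≥ 1 and 1 ≤ i ≤ p₀, ∂_{x_i} T_n u(ζ, z) = T_{n−1}(∂_{x_i}u)(ζ, z) for all z, ζ ∈ ℝ^{d+1}. -/

import Mathlib

/-- The flow of `∂_{x_i}`: `e^{δ∂_{x_i}}(t,x) = (t, x + δ e_i)`. -/
def flowX {d : ℕ} (i : Fin d) (δ : ℝ) (z : ℝ × (Fin d → ℝ)) : ℝ × (Fin d → ℝ) :=
  (z.1, z.2 + δ • (Pi.single i 1 : Fin d → ℝ))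

/-- The vector field `Y = ⟨Bx, ∇⟩ + ∂ₜ` as a differential operator. -/
noncomputable def Yop {d : ℕ} (B : Matrix (Fin d) (Fin d) ℝ)
    (u : ℝ × (Fin d → ℝ) → ℝ) : ℝ × (Fin d → ℝ) → ℝ :=
  fun z => fderiv ℝ u z ((1 : ℝ), B.mulVec z.2)

/-- The partial derivative `∂_{x_i}` as a differential operator. -/
noncomputable def Dxop {d : ℕ} (i : Fin d)
    (u : ℝ × (Fin d → ℝ) → ℝ) : ℝ × (Fin d → ℝ) → ℝ :=
  fun z => fderiv ℝ u z ((0 : ℝ), (Pi.single i 1 : Fin d → ℝ))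

/-- The iterated spatial derivative `∂^β` for a multi-index `β ∈ ℕ₀^d`. -/
noncomputable def Dbeta {d : ℕ} (β : Fin d → ℕ)
    (u : ℝ × (Fin d → ℝ) → ℝ) : ℝ × (Fin d → ℝ) → ℝ :=
  (List.ofFn (fun i : Fin d => (Dxop i)^[β i])).foldr (· ∘ ·) id u

/-- `x − e^{(t−s)B} ξ`, for `z = (t,x)`, `ζ = (s,ξ)`. -/
noncomputable def vB {d : ℕ} (B : Matrix (Fin d) (Fin d) ℝ)
    (ζ z : ℝ × (Fin d → ℝ)) : Fin d → ℝ :=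
  z.2 - (NormedSpace.exp ((z.1 - ζ.1) • B)).mulVec ζ.2

/-- The `n`-th intrinsic Taylor polynomial
`T_n u(ζ, z) = Σ_{0 ≤ 2k+|β|_B ≤ n} (1/(k!β!)) (Y^k ∂^β u(ζ)) (t−s)^k (x−e^{(t−s)B}ξ)^β`,
the block index of a coordinate being recorded by the weight function `w`
(so that `|β|_B = Σ_i (2 w(i) + 1) β_i`). -/
noncomputable def Tpoly {d : ℕ} (w : Fin d → ℕ) (B : Matrix (Fin d) (Fin d) ℝ)
    (n : ℕ) (u : ℝ × (Fin d → ℝ) → ℝ) (ζ z : ℝ × (Fin d → ℝ)) : ℝ :=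
  ∑ k ∈ Finset.range (n + 1), ∑ β : Fin d → Fin (n + 1),
    if 2 * k + ∑ i : Fin d, (2 * w i + 1) * (β i : ℕ) ≤ n then
      (1 / ((k.factorial : ℝ) * ∏ i : Fin d, ((β i : ℕ).factorial : ℝ))) *
        ((Yop B)^[k] (Dbeta (fun i => (β i : ℕ)) u) ζ) *
        (z.1 - ζ.1) ^ k * ∏ i : Fin d, (vB B ζ z i) ^ (β i : ℕ)
    else 0


lemma dxop_contDiff {d : ℕ} (i : Fin d) {u : ℝ × (Fin d → ℝ) → ℝ}
    (hu : ContDiff ℝ (⊤ : ℕ∞) u) : ContDiff ℝ (⊤ : ℕ∞) (Dxop i u) :=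
  (hu.fderiv_right (by simp)).clm_apply contDiff_const

lemma dxop_comm {d : ℕ} (a b : Fin d) {u : ℝ × (Fin d → ℝ) → ℝ}
    (hu : ContDiff ℝ (⊤ : ℕ∞) u) : Dxop a (Dxop b u) = Dxop b (Dxop a u) := by
  funext z
  have hdu : ContDiff ℝ (⊤ : ℕ∞) (fderiv ℝ u) := hu.fderiv_right (by simp)
  have key : ∀ (c : Fin d) (v : ℝ × (Fin d → ℝ)),
      Dxop c (fun y => fderiv ℝ u y v) z
        = fderiv ℝ (fderiv ℝ u) z ((0:ℝ), Pi.single c 1) v := by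
    intro c v
    have h1 : fderiv ℝ (fun y => (fderiv ℝ u y) v) z
        = (fderiv ℝ u z).comp (fderiv ℝ (fun _ => v) z)
            + (fderiv ℝ (fderiv ℝ u) z).flip v :=
      fderiv_clm_apply (hdu.differentiable (by simp) z)
        (differentiableAt_const v)
    simp [Dxop, h1]
  have hsym := second_derivative_symmetric
    (f := u) (f' := fderiv ℝ u) (f'' := fderiv ℝ (fderiv ℝ u) z) (x := z)
    (fun y => (hu.differentiable (by simp) y).hasFDerivAt)
    ((hdu.differentiable (by simp) z).hasFDerivAt)
    ((0:ℝ), Pi.single a 1) ((0:ℝ), Pi.single b 1)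
  show Dxop a (fun y => fderiv ℝ u y ((0:ℝ), Pi.single b 1)) z
      = Dxop b (fun y => fderiv ℝ u y ((0:ℝ), Pi.single a 1)) z
  rw [key, key, hsym]

lemma dxop_iter_contDiff {d : ℕ} (i : Fin d) (m : ℕ) {u : ℝ × (Fin d → ℝ) → ℝ}
    (hu : ContDiff ℝ (⊤ : ℕ∞) u) : ContDiff ℝ (⊤ : ℕ∞) ((Dxop i)^[m] u) := by
  induction m with
  | zero => exact hu
  | succ m ih => rw [Function.iterate_succ_apply']; exact dxop_contDiff i ih

lemma dxop_comm_iter {d : ℕ} (a b : Fin d) (m : ℕ) {u : ℝ × (Fin d → ℝ) → ℝ}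
    (hu : ContDiff ℝ (⊤ : ℕ∞) u) : (Dxop b)^[m] (Dxop a u) = Dxop a ((Dxop b)^[m] u) := by
  induction m with
  | zero => rfl
  | succ m ih =>
      rw [Function.iterate_succ_apply', Function.iterate_succ_apply', ih,
        dxop_comm b a (dxop_iter_contDiff b m hu)]

/-- Apply `(Dxop j)^[β j]` for `j` running over a list. -/
noncomputable def applyOps {d : ℕ} (β : Fin d → ℕ) :
    List (Fin d) → (ℝ × (Fin d → ℝ) → ℝ) → (ℝ × (Fin d → ℝ) → ℝ)
  | [], u => u
  | j :: l, u => (Dxop j)^[β j] (applyOps β l u)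

lemma applyOps_contDiff {d : ℕ} (β : Fin d → ℕ) (l : List (Fin d))
    {u : ℝ × (Fin d → ℝ) → ℝ} (hu : ContDiff ℝ (⊤ : ℕ∞) u) :
    ContDiff ℝ (⊤ : ℕ∞) (applyOps β l u) := by
  induction l with
  | nil => exact hu
  | cons j l ih => exact dxop_iter_contDiff j (β j) ih

lemma applyOps_comm {d : ℕ} (β : Fin d → ℕ) (l : List (Fin d)) (i : Fin d)
    {u : ℝ × (Fin d → ℝ) → ℝ} (hu : ContDiff ℝ (⊤ : ℕ∞) u) :
    applyOps β l (Dxop i u) = Dxop i (applyOps β l u) := by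
  induction l with
  | nil => rfl
  | cons j l ih =>
      show (Dxop j)^[β j] (applyOps β l (Dxop i u)) = _
      rw [ih, dxop_comm_iter i j (β j) (applyOps_contDiff β l hu)]
      rfl

lemma applyOps_append {d : ℕ} (β : Fin d → ℕ) (l₁ l₂ : List (Fin d))
    (u : ℝ × (Fin d → ℝ) → ℝ) :
    applyOps β (l₁ ++ l₂) u = applyOps β l₁ (applyOps β l₂ u) := by
  induction l₁ with
  | nil => rfl
  | cons j l ih =>
      rw [List.cons_append]
      show (Dxop j)^[β j] (applyOps β (l ++ l₂) u) = _
      rw [ih]; rfl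

lemma applyOps_congr {d : ℕ} (β γ : Fin d → ℕ) (l : List (Fin d))
    (h : ∀ j ∈ l, β j = γ j) (u : ℝ × (Fin d → ℝ) → ℝ) :
    applyOps β l u = applyOps γ l u := by
  induction l with
  | nil => rfl
  | cons j l ih =>
      show (Dxop j)^[β j] (applyOps β l u) = (Dxop j)^[γ j] (applyOps γ l u)
      rw [h j List.mem_cons_self, ih (fun j hj => h j (List.mem_cons_of_mem _ hj))]

lemma dbeta_eq_applyOps {d : ℕ} (β : Fin d → ℕ) (u : ℝ × (Fin d → ℝ) → ℝ) :
    Dbeta β u = applyOps β (List.finRange d) u := by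
  unfold Dbeta
  rw [List.ofFn_eq_map]
  generalize List.finRange d = l
  induction l with
  | nil => rfl
  | cons j l ih => simp only [List.map_cons, List.foldr_cons, Function.comp_apply, ih]; rfl

lemma dbeta_succ {d : ℕ} (i : Fin d) (β : Fin d → ℕ) {u : ℝ × (Fin d → ℝ) → ℝ}
    (hu : ContDiff ℝ (⊤ : ℕ∞) u) :
    Dbeta (fun j => if j = i then β j + 1 else β j) u = Dbeta β (Dxop i u) := by
  set β' : Fin d → ℕ := fun j => if j = i then β j + 1 else β j with hβ'
  obtain ⟨s, t, hst⟩ := List.append_of_mem (List.mem_finRange i)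
  have hnd : (List.finRange d).Nodup := List.nodup_finRange d
  rw [hst] at hnd
  have his : i ∉ s := by
    intro h; exact (List.disjoint_of_nodup_append hnd) h List.mem_cons_self
  have hit : i ∉ t := by
    have := (List.nodup_append.mp hnd).2.1
    simp only [List.nodup_cons] at this
    exact this.1
  have hcongr : ∀ (l : List (Fin d)), i ∉ l → ∀ v, applyOps β' l v = applyOps β l v := by
    intro l hl v
    exact applyOps_congr β' β l (fun j hj => by
      simp only [hβ']; rw [if_neg]; rintro rfl; exact hl hj) v
  rw [dbeta_eq_applyOps, dbeta_eq_applyOps, hst]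
  rw [applyOps_append, applyOps_append]
  show applyOps β' s ((Dxop i)^[β' i] (applyOps β' t u))
      = applyOps β s ((Dxop i)^[β i] (applyOps β t (Dxop i u)))
  rw [hcongr s his, hcongr t hit]
  refine congrArg (applyOps β s) ?_
  have : β' i = β i + 1 := by simp [hβ']
  rw [this, Function.iterate_succ_apply, applyOps_comm β t i hu]

/-- First-order derivative of the intrinsic Taylor polynomial: for `n ≥ 1` and a
direction `i` in the zeroth block (`i ≤ p₀`),
`∂_{x_i} T_n u(ζ, z) = T_{n−1}(∂_{x_i}u)(ζ, z)`. -/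
theorem stmt13 {d : ℕ} (w : Fin d → ℕ) (B : Matrix (Fin d) (Fin d) ℝ)
    (hB : ∀ i j, B i j ≠ 0 → w i = w j + 1)
    (u : ℝ × (Fin d → ℝ) → ℝ) (hu : ContDiff ℝ (⊤ : ℕ∞) u)
    (n : ℕ) (hn : 1 ≤ n) (i : Fin d) (hi : w i = 0)
    (z ζ : ℝ × (Fin d → ℝ)) :
    deriv (fun δ : ℝ => Tpoly w B n u ζ (flowX i δ z)) 0
      = Tpoly w B (n - 1) (Dxop i u) ζ z := by
  classical
  set a : Fin d → ℝ := vB B ζ z with ha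
  have hv : ∀ (δ : ℝ) (j : Fin d),
      vB B ζ (flowX i δ z) j = a j + δ * (if j = i then 1 else 0) := by
    intro δ j
    rw [ha]
    simp only [vB, flowX, Pi.sub_apply, Pi.add_apply, Pi.smul_apply, smul_eq_mul,
      Pi.single_apply]
    ring
  have hprodv : ∀ (δ : ℝ) (β : Fin d → Fin (n + 1)),
      ∏ j, vB B ζ (flowX i δ z) j ^ (β j : ℕ)
        = (a i + δ) ^ (β i : ℕ) * ∏ j ∈ Finset.univ.erase i, a j ^ (β j : ℕ) := by
    intro δ β
    rw [← Finset.mul_prod_erase Finset.univ _ (Finset.mem_univ i)]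
    congr 1
    · rw [hv δ i]; simp
    · exact Finset.prod_congr rfl fun j hj => by
        rw [hv δ j, if_neg (Finset.ne_of_mem_erase hj)]; ring_nf
  have hder : HasDerivAt (fun δ : ℝ => Tpoly w B n u ζ (flowX i δ z))
      (∑ k ∈ Finset.range (n + 1), ∑ β : Fin d → Fin (n + 1),
        if 2 * k + ∑ j : Fin d, (2 * w j + 1) * (β j : ℕ) ≤ n then
          (1 / ((k.factorial : ℝ) * ∏ j : Fin d, ((β j : ℕ).factorial : ℝ))) *
            ((Yop B)^[k] (Dbeta (fun j => (β j : ℕ)) u) ζ) * (z.1 - ζ.1) ^ k *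
            (((β i : ℕ) : ℝ) * a i ^ ((β i : ℕ) - 1) *
              ∏ j ∈ Finset.univ.erase i, a j ^ (β j : ℕ))
        else 0) 0 := by
    simp only [Tpoly]
    refine HasDerivAt.fun_sum fun k _ => HasDerivAt.fun_sum fun β _ => ?_
    by_cases hc : 2 * k + ∑ j : Fin d, (2 * w j + 1) * (β j : ℕ) ≤ n
    · simp only [if_pos hc]
      have hfun : (fun δ : ℝ =>
            (1 / ((k.factorial : ℝ) * ∏ j : Fin d, ((β j : ℕ).factorial : ℝ))) *
              ((Yop B)^[k] (Dbeta (fun j => (β j : ℕ)) u) ζ) *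
              ((flowX i δ z).1 - ζ.1) ^ k *
              ∏ j, vB B ζ (flowX i δ z) j ^ (β j : ℕ))
          = fun δ : ℝ =>
            ((1 / ((k.factorial : ℝ) * ∏ j : Fin d, ((β j : ℕ).factorial : ℝ))) *
              ((Yop B)^[k] (Dbeta (fun j => (β j : ℕ)) u) ζ) * (z.1 - ζ.1) ^ k) *
              ((a i + δ) ^ (β i : ℕ) *
                ∏ j ∈ Finset.univ.erase i, a j ^ (β j : ℕ)) := by
        funext δ
        rw [hprodv δ β]
        rfl
      rw [hfun]
      have hd := ((((hasDerivAt_id (0:ℝ)).const_add (a i)).pow (β i : ℕ)).mul_const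
          (∏ j ∈ Finset.univ.erase i, a j ^ (β j : ℕ))).const_mul
          ((1 / ((k.factorial : ℝ) * ∏ j : Fin d, ((β j : ℕ).factorial : ℝ))) *
            ((Yop B)^[k] (Dbeta (fun j => (β j : ℕ)) u) ζ) * (z.1 - ζ.1) ^ k)
      convert hd using 1
      · rfl
      · funext y; rfl
      simp only [id_eq, add_zero, mul_one]
    · simp only [if_neg hc]
      exact hasDerivAt_const 0 0
  rw [hder.deriv]
  simp only [Tpoly]
  simp only [Nat.sub_add_cancel hn]
  rw [← ha]
  refine Eq.trans ?_ (Finset.sum_subset (Finset.range_subset_range.2 (Nat.le_succ n))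
    (fun x hx hxn => Finset.sum_eq_zero fun γ _ => if_neg (by
      simp only [Finset.mem_range] at hx hxn; omega))).symm
  have hnpos : 0 < n := hn
  let toQ : (Fin d → Fin (n + 1)) → (Fin d → Fin (n - 1 + 1)) := fun β j =>
    if j = i then ⟨(β i : ℕ) - 1, by have h := (β i).isLt; omega⟩
    else ⟨min (β j : ℕ) (n - 1), by have h := Nat.min_le_right (β j : ℕ) (n - 1); omega⟩
  let toP : (Fin d → Fin (n - 1 + 1)) → (Fin d → Fin (n + 1)) := fun γ j =>
    if j = i then ⟨(γ i : ℕ) + 1, by have h := (γ i).isLt; omega⟩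
    else ⟨(γ j : ℕ), by have h := (γ j).isLt; omega⟩
  have htoP : ∀ (γ : Fin d → Fin (n - 1 + 1)) (j : Fin d),
      (toP γ j : ℕ) = if j = i then (γ i : ℕ) + 1 else (γ j : ℕ) := by
    intro γ j; by_cases hj : j = i <;> simp [toP, hj]
  have hsplit : ∀ f : Fin d → ℕ,
      (∑ j : Fin d, f j) = f i + ∑ j ∈ Finset.univ.erase i, f j :=
    fun f => (Finset.add_sum_erase Finset.univ f (Finset.mem_univ i)).symm
  have hsplitR : ∀ f : Fin d → ℝ,
      (∏ j : Fin d, f j) = f i * ∏ j ∈ Finset.univ.erase i, f j :=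
    fun f => (Finset.mul_prod_erase Finset.univ f (Finset.mem_univ i)).symm
  refine Finset.sum_congr rfl fun k hk => ?_
  have hbound : ∀ β : Fin d → Fin (n + 1), 1 ≤ (β i : ℕ) →
      2 * k + ∑ j : Fin d, (2 * w j + 1) * (β j : ℕ) ≤ n →
      ∀ j, j ≠ i → (β j : ℕ) ≤ n - 1 := by
    intro β h1 h2 j hj
    have hji : j ∈ Finset.univ.erase i := Finset.mem_erase.2 ⟨hj, Finset.mem_univ j⟩
    have h3 : (2 * w j + 1) * (β j : ℕ)
        ≤ ∑ t ∈ Finset.univ.erase i, (2 * w t + 1) * (β t : ℕ) :=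
      Finset.single_le_sum (f := fun t => (2 * w t + 1) * (β t : ℕ)) (fun t _ => Nat.zero_le _) hji
    have h5 : (β j : ℕ) ≤ (2 * w j + 1) * (β j : ℕ) :=
      Nat.le_mul_of_pos_left _ (by omega)
    have h6 := le_trans h5 h3
    rw [hsplit (fun t => (2 * w t + 1) * (β t : ℕ)), hi] at h2
    omega
  have htoQ : ∀ β : Fin d → Fin (n + 1), 1 ≤ (β i : ℕ) →
      2 * k + ∑ j : Fin d, (2 * w j + 1) * (β j : ℕ) ≤ n →
      ∀ j, (toQ β j : ℕ) = if j = i then (β i : ℕ) - 1 else (β j : ℕ) := by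
    intro β h1 h2 j
    by_cases hj : j = i
    · simp [toQ, hj]
    · simp [toQ, hj, Nat.min_eq_left (hbound β h1 h2 j hj)]
  have hSrel : ∀ β : Fin d → Fin (n + 1), 1 ≤ (β i : ℕ) →
      2 * k + ∑ j : Fin d, (2 * w j + 1) * (β j : ℕ) ≤ n →
      (∑ j : Fin d, (2 * w j + 1) * (toQ β j : ℕ)) + 1
        = ∑ j : Fin d, (2 * w j + 1) * (β j : ℕ) := by
    intro β h1 h2
    rw [hsplit (fun j => (2 * w j + 1) * (toQ β j : ℕ)),
      hsplit (fun j => (2 * w j + 1) * (β j : ℕ))]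
    have he : (∑ j ∈ Finset.univ.erase i, (2 * w j + 1) * (toQ β j : ℕ))
        = ∑ j ∈ Finset.univ.erase i, (2 * w j + 1) * (β j : ℕ) :=
      Finset.sum_congr rfl fun j hj => by
        rw [htoQ β h1 h2 j, if_neg (Finset.ne_of_mem_erase hj)]
    rw [he, htoQ β h1 h2 i, if_pos rfl, hi]
    omega
  have hSrel' : ∀ γ : Fin d → Fin (n - 1 + 1),
      (∑ j : Fin d, (2 * w j + 1) * (toP γ j : ℕ))
        = (∑ j : Fin d, (2 * w j + 1) * (γ j : ℕ)) + 1 := by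
    intro γ
    rw [hsplit (fun j => (2 * w j + 1) * (toP γ j : ℕ)),
      hsplit (fun j => (2 * w j + 1) * (γ j : ℕ))]
    have he : (∑ j ∈ Finset.univ.erase i, (2 * w j + 1) * (toP γ j : ℕ))
        = ∑ j ∈ Finset.univ.erase i, (2 * w j + 1) * (γ j : ℕ) :=
      Finset.sum_congr rfl fun j hj => by
        rw [htoP γ j, if_neg (Finset.ne_of_mem_erase hj)]
    rw [he, htoP γ i, if_pos rfl, hi]
    omega
  refine Eq.trans (Finset.sum_filter_of_ne (p := fun β : Fin d → Fin (n + 1) =>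
      1 ≤ (β i : ℕ) ∧ 2 * k + ∑ j : Fin d, (2 * w j + 1) * (β j : ℕ) ≤ n) ?_).symm
    (Eq.trans ?_ (Finset.sum_filter_of_ne (p := fun γ : Fin d → Fin (n - 1 + 1) =>
      2 * k + ∑ j : Fin d, (2 * w j + 1) * (γ j : ℕ) ≤ n - 1) ?_))
  · -- f β ≠ 0 → P β
    intro β _ hne
    by_cases hc : 2 * k + ∑ j : Fin d, (2 * w j + 1) * (β j : ℕ) ≤ n
    · refine ⟨?_, hc⟩
      by_contra h1
      have hz : (β i : ℕ) = 0 := by omega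
      exact hne (by rw [if_pos hc, hz]; simp)
    · exact absurd (if_neg hc) hne
  · -- the bijection between the filtered sums
    refine Finset.sum_bij' (fun β _ => toQ β) (fun γ _ => toP γ) ?_ ?_ ?_ ?_ ?_ <;> beta_reduce
    · intro β hβ
      obtain ⟨-, hP⟩ := Finset.mem_filter.1 hβ
      obtain ⟨h1, h2⟩ := hP
      refine Finset.mem_filter.2 ⟨Finset.mem_univ _, ?_⟩
      show 2 * k + ∑ j : Fin d, (2 * w j + 1) * (toQ β j : ℕ) ≤ n - 1
      have := hSrel β h1 h2
      omega
    · intro γ hγ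
      obtain ⟨-, hQ⟩ := Finset.mem_filter.1 hγ
      have h2 : 2 * k + ∑ j : Fin d, (2 * w j + 1) * (γ j : ℕ) ≤ n - 1 := hQ
      refine Finset.mem_filter.2 ⟨Finset.mem_univ _, ?_⟩
      show 1 ≤ (toP γ i : ℕ) ∧ 2 * k + ∑ j : Fin d, (2 * w j + 1) * (toP γ j : ℕ) ≤ n
      constructor
      · rw [htoP γ i, if_pos rfl]; omega
      · have := hSrel' γ; omega
    · intro β hβ
      obtain ⟨-, hP⟩ := Finset.mem_filter.1 hβ
      obtain ⟨h1, h2⟩ := hP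
      funext j
      apply Fin.ext
      show (toP (toQ β) j : ℕ) = (β j : ℕ)
      rw [htoP (toQ β) j]
      by_cases hj : j = i
      · rw [if_pos hj, htoQ β h1 h2 i, if_pos rfl, hj]
        omega
      · rw [if_neg hj, htoQ β h1 h2 j, if_neg hj]
    · intro γ hγ
      obtain ⟨-, hQ⟩ := Finset.mem_filter.1 hγ
      have h2 : 2 * k + ∑ j : Fin d, (2 * w j + 1) * (γ j : ℕ) ≤ n - 1 := hQ
      have h1 : 1 ≤ (toP γ i : ℕ) := by rw [htoP γ i, if_pos rfl]; omega
      have h2' : 2 * k + ∑ j : Fin d, (2 * w j + 1) * (toP γ j : ℕ) ≤ n := by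
        have := hSrel' γ; omega
      funext j
      apply Fin.ext
      show (toQ (toP γ) j : ℕ) = (γ j : ℕ)
      rw [htoQ (toP γ) h1 h2' j]
      by_cases hj : j = i
      · rw [if_pos hj, htoP γ i, if_pos rfl, hj]
        omega
      · rw [if_neg hj, htoP γ j, if_neg hj]
    · intro β hβ
      obtain ⟨-, hP⟩ := Finset.mem_filter.1 hβ
      obtain ⟨h1, h2⟩ := hP
      have hQc : 2 * k + ∑ j : Fin d, (2 * w j + 1) * (toQ β j : ℕ) ≤ n - 1 := by
        have := hSrel β h1 h2; omega
      rw [if_pos h2, if_pos hQc]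
      have hYeq : Dbeta (fun j => (toQ β j : ℕ)) (Dxop i u)
          = Dbeta (fun j => (β j : ℕ)) u := by
        have harg : (fun j => if j = i then (toQ β j : ℕ) + 1 else (toQ β j : ℕ))
            = fun j => (β j : ℕ) := by
          funext j
          rw [htoQ β h1 h2 j]
          by_cases hj : j = i
          · rw [if_pos hj, if_pos hj, hj]
            omega
          · rw [if_neg hj, if_neg hj]
        rw [← dbeta_succ i (fun j => (toQ β j : ℕ)) hu, harg]
      have hprodA : (∏ j : Fin d, a j ^ (toQ β j : ℕ))
          = a i ^ ((β i : ℕ) - 1) * ∏ j ∈ Finset.univ.erase i, a j ^ (β j : ℕ) := by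
        rw [hsplitR (fun j => a j ^ (toQ β j : ℕ))]
        rw [htoQ β h1 h2 i, if_pos rfl]
        congr 1
        exact Finset.prod_congr rfl fun j hj => by
          rw [htoQ β h1 h2 j, if_neg (Finset.ne_of_mem_erase hj)]
      have hfactQ : (∏ j : Fin d, (((toQ β j : ℕ)).factorial : ℝ))
          = ((((β i : ℕ) - 1).factorial : ℝ))
              * ∏ j ∈ Finset.univ.erase i, (((β j : ℕ)).factorial : ℝ) := by
        rw [hsplitR (fun j => (((toQ β j : ℕ)).factorial : ℝ))]
        rw [htoQ β h1 h2 i, if_pos rfl]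
        congr 1
        exact Finset.prod_congr rfl fun j hj => by
          rw [htoQ β h1 h2 j, if_neg (Finset.ne_of_mem_erase hj)]
      have hfactP : (∏ j : Fin d, (((β j : ℕ)).factorial : ℝ))
          = (((β i : ℕ)).factorial : ℝ)
              * ∏ j ∈ Finset.univ.erase i, (((β j : ℕ)).factorial : ℝ) :=
        hsplitR (fun j => (((β j : ℕ)).factorial : ℝ))
      rw [hYeq, hprodA, hfactQ, hfactP]
      have hfac : (((β i : ℕ)).factorial : ℝ)
          = (((β i : ℕ) : ℝ)) * ((((β i : ℕ) - 1).factorial : ℝ)) := by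
        exact_mod_cast (Nat.mul_factorial_pred (by omega)).symm
      rw [hfac]
      have hkf : (k.factorial : ℝ) ≠ 0 := Nat.cast_ne_zero.2 k.factorial_pos.ne'
      have hE : (∏ j ∈ Finset.univ.erase i, (((β j : ℕ)).factorial : ℝ)) ≠ 0 :=
        Finset.prod_ne_zero_iff.2 fun j _ => Nat.cast_ne_zero.2 (Nat.factorial_pos _).ne'
      have hN1 : ((((β i : ℕ) - 1).factorial : ℝ)) ≠ 0 :=
        Nat.cast_ne_zero.2 (Nat.factorial_pos _).ne'
      have hNr : (((β i : ℕ) : ℝ)) ≠ 0 := Nat.cast_ne_zero.2 (by omega)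
      field_simp
  · -- g γ ≠ 0 → Q γ
    intro γ _ hne
    by_contra hq
    exact hne (if_neg hq)
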